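/- Assume the positivity condition: l_j − L_j(τ) > 0 for every τ ∈ ℝ^ℓ and every j. Then for every η ∈ ℝ^ℓ: (i) the function τ ↦ 2⟨η, τ⟩ − K_λ(τ) is bounded above on ℝ^ℓ if and only if η belongs to the moment polytope Δ := { x ∈ ℝ^ℓ : 0 ≤ x_j ≤ l_j − Σ_{i<j} c_{ji} x_i for all j }; and (ii) this function attains a finite maximum at some point τ₀ ∈ ℝ^ℓ if and only if η = J(τ₀) for some τ₀ ∈ ℝ^ℓ, i.e. if and only if η lies in the image of the moment map J = (J₁, …, J_ℓ). -/

import Mathlib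

/-!
In the coordinates `σ = Φ⁻¹(τ)` the function `2⟨η, τ⟩ - K_λ(τ)` separates as
`∑ₖ (2 ηₖ σₖ - mₖ K(σₖ))` with `mₖ = lₖ - ∑_{i<k} c_{ki} ηᵢ`: the triangular part of `⟨η, Φ σ⟩`
transposes into the coefficients of `K(σₖ)`. Since `K(s)` lies within `1` of `0` at `-∞` and of
`2 s` at `+∞`, a summand is bounded above iff `0 ≤ ηₖ ≤ mₖ`, which is the polytope.
At a maximum the gradient vanishes, i.e. `η = J(τ₀)`. Conversely, differentiating
`K_λ ∘ Φ = ∑ lᵢ K(σᵢ)` gives `Jₖ(Φ σ) = (lₖ - Lₖ(Φ σ)) 𝒥(σₖ)`; so if `η = J(Φ σ⁰)` then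
`ηₖ = mₖ 𝒥(σ⁰ₖ)` with `mₖ > 0`, and the tangent line of the convex function `K` at `σ⁰ₖ` shows that
every summand is maximal there.
-/

open Real Finset

noncomputable section

/-- `K(t) = log(1 + e^{2t})`. -/
def Kfun (t : ℝ) : ℝ := Real.log (1 + Real.exp (2 * t))

/-- `𝒥(t) = e^{2t}/(1 + e^{2t})`. -/
def Jfun (t : ℝ) : ℝ := Real.exp (2 * t) / (1 + Real.exp (2 * t))

/-- The coordinate change `Φ(σ)_i = σ_i + (1/2)·Σ_{j>i} c_{ji} K(σ_j)`. -/
def Phi {ℓ : ℕ} (c : Fin ℓ → Fin ℓ → ℤ) (σ : Fin ℓ → ℝ) : Fin ℓ → ℝ :=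
  fun i => σ i + (1 / 2) * ∑ j ∈ Finset.univ.filter (fun j => i < j), (c j i : ℝ) * Kfun (σ j)

/-- The inverse of the coordinate change `Φ`. -/
def PhiInv {ℓ : ℕ} (c : Fin ℓ → Fin ℓ → ℤ) : (Fin ℓ → ℝ) → (Fin ℓ → ℝ) :=
  Function.invFun (Phi c)

/-- The Kähler potential `K_λ(τ) = Σ_i l_i K(τ̃_i)`, where `τ̃ = Φ⁻¹(τ)`. -/
def Klam {ℓ : ℕ} (l : Fin ℓ → ℤ) (c : Fin ℓ → Fin ℓ → ℤ) (τ : Fin ℓ → ℝ) : ℝ :=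
  ∑ i, (l i : ℝ) * Kfun (PhiInv c τ i)

/-- The action variables `J_j(τ) = (1/2)·∂K_λ/∂τ_j`. -/
def Jact {ℓ : ℕ} (l : Fin ℓ → ℤ) (c : Fin ℓ → Fin ℓ → ℤ) (j : Fin ℓ) (τ : Fin ℓ → ℝ) : ℝ :=
  (1 / 2) * fderiv ℝ (Klam l c) τ (Pi.single j 1)

/-- `L_j(τ) = Σ_{i<j} c_{ji} J_i(τ)`. -/
def Lfun {ℓ : ℕ} (l : Fin ℓ → ℤ) (c : Fin ℓ → Fin ℓ → ℤ) (j : Fin ℓ) (τ : Fin ℓ → ℝ) : ℝ :=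
  ∑ i ∈ Finset.univ.filter (fun i => i < j), (c j i : ℝ) * Jact l c i τ

theorem bddAbove_range_sum_iff {ι α β : Type*} [Fintype ι] [DecidableEq ι] [Nonempty α]
    [AddCommGroup β] [PartialOrder β] [IsOrderedAddMonoid β] (f : ι → α → β) :
    BddAbove (Set.range fun x : ι → α => ∑ i, f i (x i)) ↔ ∀ i, BddAbove (Set.range (f i)) := by
  constructor
  · rintro ⟨M, hM⟩ i
    obtain ⟨a⟩ := ‹Nonempty α›
    refine ⟨M - ∑ k ∈ univ.erase i, f k a, Set.forall_mem_range.2 fun s => ?_⟩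
    have h := hM (Set.mem_range_self (Function.update (fun _ => a) i s))
    rw [← add_sum_erase _ _ (mem_univ i), Function.update_self,
      sum_congr rfl fun k hk => by rw [Function.update_of_ne (ne_of_mem_erase hk)]] at h
    exact le_sub_iff_add_le.2 h
  · intro h
    choose M hM using h
    exact ⟨∑ i, M i, Set.forall_mem_range.2 fun x => sum_le_sum fun i _ => hM i ⟨x i, rfl⟩⟩

theorem sum_mul_sum_filter_lt_comm {ι R : Type*} [Fintype ι] [LinearOrder ι] [CommSemiring R]
    (b : ι → ι → R) (a y : ι → R) :
    ∑ i, a i * ∑ j ∈ univ.filter (fun j => i < j), b j i * y j =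
      ∑ j, (∑ i ∈ univ.filter (fun i => i < j), b j i * a i) * y j := by
  simp_rw [mul_sum, sum_mul]
  rw [sum_comm' (t' := univ) (s' := fun j => univ.filter (fun i => i < j)) (by simp)]
  exact sum_congr rfl fun _ _ => sum_congr rfl fun _ _ => by ring

theorem hasDerivAt_Kfun (t : ℝ) : HasDerivAt Kfun (2 * Jfun t) t := by
  have h := (((hasDerivAt_id t).const_mul 2).exp.const_add 1).log (by positivity)
  simp only [id, mul_one] at h
  exact h.congr_deriv (by unfold Jfun; ring)

theorem differentiable_Kfun : Differentiable ℝ Kfun :=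
  fun t => (hasDerivAt_Kfun t).differentiableAt

theorem Kfun_nonneg (t : ℝ) : 0 ≤ Kfun t :=
  Real.log_nonneg (le_add_of_nonneg_right (exp_pos _).le)

theorem Kfun_le_exp (t : ℝ) : Kfun t ≤ exp (2 * t) := by
  have := Real.log_le_sub_one_of_pos (by positivity : 0 < 1 + exp (2 * t))
  unfold Kfun
  linarith

theorem Kfun_eq_two_mul_add_Kfun_neg (t : ℝ) : Kfun t = 2 * t + Kfun (-t) := by
  have h : 1 + exp (2 * t) = exp (2 * t) * (1 + exp (2 * -t)) := by
    rw [mul_add, ← exp_add, show 2 * t + 2 * -t = 0 by ring, exp_zero, mul_one, add_comm]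
  rw [Kfun, h, Real.log_mul (exp_pos _).ne' (by positivity), Real.log_exp, Kfun]

/- With `p = 𝒥(s₀)`, `(1 + e^{2s}) / (1 + e^{2s₀}) = (1 - p) + p e^{2(s - s₀)}`, and convexity of
`exp` bounds this convex combination below by `e^{2p(s - s₀)}`. -/
theorem Kfun_tangent (s₀ s : ℝ) : 2 * Jfun s₀ * (s - s₀) ≤ Kfun s - Kfun s₀ := by
  set p := Jfun s₀ with hp_def
  have hp : 0 ≤ p := by rw [hp_def, Jfun]; positivity
  have hq : 0 ≤ 1 - p := by
    rw [sub_nonneg, hp_def, Jfun, div_le_one (by positivity)]; linarith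
  have hconv := convexOn_exp.2 (Set.mem_univ 0) (Set.mem_univ (2 * (s - s₀))) hq hp
    (sub_add_cancel 1 p)
  simp only [smul_eq_mul, mul_zero, zero_add, exp_zero, mul_one] at hconv
  suffices exp (p * (2 * (s - s₀)) + Kfun s₀) ≤ exp (Kfun s) by
    linarith [exp_le_exp.1 this]
  have hK : ∀ t, exp (Kfun t) = 1 + exp (2 * t) := fun t => exp_log (by positivity)
  rw [exp_add, hK, hK]
  calc exp (p * (2 * (s - s₀))) * (1 + exp (2 * s₀))
      ≤ (1 - p + p * exp (2 * (s - s₀))) * (1 + exp (2 * s₀)) := by gcongr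
    _ = 1 + exp (2 * s) := by
      rw [hp_def, Jfun, show 2 * s = 2 * (s - s₀) + 2 * s₀ by ring, exp_add]
      field_simp
      ring

theorem two_mul_sub_mul_Kfun_le {m : ℝ} (hm : 0 ≤ m) (s₀ s : ℝ) :
    2 * (m * Jfun s₀) * s - m * Kfun s ≤ 2 * (m * Jfun s₀) * s₀ - m * Kfun s₀ := by
  nlinarith [mul_le_mul_of_nonneg_left (Kfun_tangent s₀ s) hm]

theorem nonpos_of_forall_nonneg_mul_le {a C : ℝ} (h : ∀ s, 0 ≤ s → a * s ≤ C) : a ≤ 0 := by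
  by_contra! ha
  have := h ((|C| + 1) / a) (by positivity)
  rw [mul_div_cancel₀ _ ha.ne'] at this
  linarith [le_abs_self C]

theorem bddAbove_range_two_mul_sub_mul_Kfun_iff (η m : ℝ) :
    BddAbove (Set.range fun s => 2 * η * s - m * Kfun s) ↔ 0 ≤ η ∧ η ≤ m := by
  constructor
  · rintro ⟨M, hM⟩
    have hle : ∀ s, 2 * η * s - m * Kfun s ≤ M := fun s => hM (Set.mem_range_self s)
    have hK : ∀ s, 0 ≤ s → |m * Kfun (-s)| ≤ |m| := fun s hs => by
      rw [abs_mul, abs_of_nonneg (Kfun_nonneg _)]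
      refine mul_le_of_le_one_right (abs_nonneg m) ((Kfun_le_exp _).trans ?_)
      exact exp_le_one_iff.2 (by linarith)
    constructor
    · have := nonpos_of_forall_nonneg_mul_le (a := -(2 * η)) (C := M + |m|) fun s hs => by
        linarith [hle (-s), (abs_le.1 (hK s hs)).2]
      linarith
    · have := nonpos_of_forall_nonneg_mul_le (a := 2 * (η - m)) (C := M + |m|) fun s hs => by
        have := hle s
        rw [Kfun_eq_two_mul_add_Kfun_neg s] at this
        linarith [(abs_le.1 (hK s hs)).2]
      linarith
  · rintro ⟨hη, hηm⟩
    refine ⟨0, Set.forall_mem_range.2 fun s => ?_⟩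
    have h2s : 2 * s ≤ Kfun s := by linarith [Kfun_eq_two_mul_add_Kfun_neg s, Kfun_nonneg (-s)]
    nlinarith [mul_nonneg hη (sub_nonneg.2 h2s), mul_nonneg (sub_nonneg.2 hηm) (Kfun_nonneg s)]

-- `Φ` is unitriangular, so it is inverted by back substitution from the last coordinate down.
def Psi {ℓ : ℕ} (c : Fin ℓ → Fin ℓ → ℤ) (τ : Fin ℓ → ℝ) (i : Fin ℓ) : ℝ :=
  τ i - (1 / 2) * ∑ j ∈ (univ.filter (fun j => i < j)).attach, (c j.1 i : ℝ) * Kfun (Psi c τ j.1)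
termination_by ℓ - i.val
decreasing_by
  have := (mem_filter.mp j.2).2
  omega

section Inverse

variable {ℓ : ℕ} (c : Fin ℓ → Fin ℓ → ℤ)

theorem Psi_apply (τ : Fin ℓ → ℝ) (i : Fin ℓ) :
    Psi c τ i =
      τ i - (1 / 2) * ∑ j ∈ univ.filter (fun j => i < j), (c j i : ℝ) * Kfun (Psi c τ j) := by
  rw [Psi, sum_attach (univ.filter (fun j => i < j)) fun j => (c j i : ℝ) * Kfun (Psi c τ j)]

theorem Phi_Psi (τ : Fin ℓ → ℝ) : Phi c (Psi c τ) = τ := by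
  funext i
  rw [Phi, Psi_apply]
  ring

theorem Psi_Phi (σ : Fin ℓ → ℝ) : Psi c (Phi c σ) = σ := by
  funext i
  induction i using WellFoundedGT.induction with
  | _ i ih =>
    rw [Psi_apply, sum_congr rfl fun j hj => by rw [ih j (mem_filter.1 hj).2], Phi]
    ring

theorem PhiInv_eq_Psi : PhiInv c = Psi c := by
  funext τ
  conv_lhs => rw [← Phi_Psi c τ]
  exact Function.leftInverse_invFun (Function.LeftInverse.injective (Psi_Phi c)) _

theorem Phi_surjective : Function.Surjective (Phi c) :=
  fun τ => ⟨Psi c τ, Phi_Psi c τ⟩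

theorem Klam_Phi (l : Fin ℓ → ℤ) (σ : Fin ℓ → ℝ) :
    Klam l c (Phi c σ) = ∑ i, (l i : ℝ) * Kfun (σ i) := by
  rw [Klam, PhiInv_eq_Psi, Psi_Phi]

theorem differentiable_Psi_apply (i : Fin ℓ) : Differentiable ℝ fun τ => Psi c τ i := by
  induction i using WellFoundedGT.induction with
  | _ i ih =>
    simp_rw [Psi_apply c _ i]
    exact (differentiable_apply i).sub <| (Differentiable.fun_sum fun j hj =>
      ((differentiable_Kfun.comp (ih j (mem_filter.1 hj).2)).const_mul _)).const_mul _

theorem differentiable_Klam (l : Fin ℓ → ℤ) : Differentiable ℝ (Klam l c) := by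
  unfold Klam
  rw [PhiInv_eq_Psi]
  exact Differentiable.fun_sum fun i _ =>
    (differentiable_Kfun.comp (differentiable_Psi_apply c i)).const_mul _

end Inverse

section Derivative

variable {ℓ : ℕ} (l : Fin ℓ → ℤ) (c : Fin ℓ → Fin ℓ → ℤ)

theorem fderiv_Klam_apply (τ v : Fin ℓ → ℝ) :
    fderiv ℝ (Klam l c) τ v = 2 * ∑ i, v i * Jact l c i τ := by
  conv_lhs => rw [← univ_sum_single v]
  simp only [map_sum, Jact, mul_sum]
  refine sum_congr rfl fun i _ => ?_
  rw [← mul_one (v i), ← smul_eq_mul, Pi.single_smul', map_smul, smul_eq_mul]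
  ring

def derivPhi (σ : Fin ℓ → ℝ) : (Fin ℓ → ℝ) →L[ℝ] Fin ℓ → ℝ :=
  ContinuousLinearMap.pi fun i => ContinuousLinearMap.proj i +
    ∑ j ∈ univ.filter (fun j => i < j), ((c j i : ℝ) * Jfun (σ j)) • ContinuousLinearMap.proj j

theorem hasFDerivAt_Phi (σ : Fin ℓ → ℝ) : HasFDerivAt (Phi c) (derivPhi c σ) σ := by
  refine hasFDerivAt_pi.2 fun i => HasFDerivAt.congr_fderiv
    ((hasFDerivAt_apply i σ).add ((HasFDerivAt.fun_sum fun j _ =>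
      ((hasDerivAt_Kfun _).comp_hasFDerivAt σ (hasFDerivAt_apply j σ)).const_mul
        (c j i : ℝ)).const_mul (1 / 2 : ℝ))) ?_
  ext v
  simp only [one_div, add_apply, ContinuousLinearMap.proj_apply, smul_apply, _root_.sum_apply,
    smul_eq_mul, add_right_inj]
  rw [mul_sum]
  exact sum_congr rfl fun _ _ => by ring

theorem Jact_Phi (σ : Fin ℓ → ℝ) (k : Fin ℓ) :
    Jact l c k (Phi c σ) = ((l k : ℝ) - Lfun l c k (Phi c σ)) * Jfun (σ k) := by
  have hchain : HasFDerivAt (fun σ => ∑ i, (l i : ℝ) * Kfun (σ i))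
      ((fderiv ℝ (Klam l c) (Phi c σ)).comp (derivPhi c σ)) σ := by
    simpa only [Function.comp_def, Klam_Phi] using
      (differentiable_Klam c l _).hasFDerivAt.comp σ (hasFDerivAt_Phi c σ)
  have hdirect : HasFDerivAt (fun σ => ∑ i, (l i : ℝ) * Kfun (σ i))
      (∑ i, (l i : ℝ) • (2 * Jfun (σ i)) • ContinuousLinearMap.proj i) σ :=
    HasFDerivAt.fun_sum fun i _ =>
      ((hasDerivAt_Kfun _).comp_hasFDerivAt (f := fun σ => σ i) σ
        (hasFDerivAt_apply (𝕜 := ℝ) i σ)).const_mul _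
  have h := congrArg (· (Pi.single k 1)) (hchain.unique hdirect)
  simp only [derivPhi, ContinuousLinearMap.comp_apply, ContinuousLinearMap.coe_pi', add_apply,
    ContinuousLinearMap.proj_apply, Pi.single_apply, _root_.sum_apply, smul_apply, smul_eq_mul,
    mul_ite, mul_one, mul_zero, sum_ite_eq', mem_filter, mem_univ, true_and, fderiv_Klam_apply,
    add_mul, ite_mul, one_mul, zero_mul, sum_add_distrib, ↓reduceIte] at h
  rw [← sum_filter] at h
  have hL : ∑ i ∈ univ.filter (fun i => i < k), (c k i : ℝ) * Jfun (σ k) * Jact l c i (Phi c σ) =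
      Jfun (σ k) * Lfun l c k (Phi c σ) := by
    rw [Lfun, mul_sum]
    exact sum_congr rfl fun _ _ => by ring
  linear_combination h / 2 - hL

theorem Jact_eq_of_isLocalMax {η τ₀ : Fin ℓ → ℝ}
    (h : IsLocalMax (fun τ => 2 * ∑ i, η i * τ i - Klam l c τ) τ₀) (j : Fin ℓ) :
    Jact l c j τ₀ = η j := by
  have hF := ((HasFDerivAt.fun_sum (u := univ) fun i _ =>
    (hasFDerivAt_apply (𝕜 := ℝ) i τ₀).const_mul (η i)).const_mul 2).sub
      (differentiable_Klam c l τ₀).hasFDerivAt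
  have h0 := congrArg (· (Pi.single j 1)) (h.hasFDerivAt_eq_zero hF)
  simp only [sub_apply, smul_apply, _root_.sum_apply, ContinuousLinearMap.proj_apply,
    Pi.single_apply, smul_eq_mul, mul_ite, mul_one, mul_zero, sum_ite_eq', mem_univ, ↓reduceIte,
    fderiv_Klam_apply, ite_mul, one_mul, zero_mul, zero_apply] at h0
  linarith

end Derivative

section Separation

variable {ℓ : ℕ} (l : Fin ℓ → ℤ) (c : Fin ℓ → Fin ℓ → ℤ)

def polytopeBound (η : Fin ℓ → ℝ) (k : Fin ℓ) : ℝ :=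
  (l k : ℝ) - ∑ i ∈ univ.filter (fun i => i < k), (c k i : ℝ) * η i

theorem two_mul_sum_sub_Klam_Phi (η σ : Fin ℓ → ℝ) :
    2 * ∑ i, η i * Phi c σ i - Klam l c (Phi c σ) =
      ∑ k, (2 * η k * σ k - polytopeBound l c η k * Kfun (σ k)) := by
  have h := sum_mul_sum_filter_lt_comm (fun j i => (c j i : ℝ)) η (Kfun ∘ σ)
  simp only [Function.comp_apply] at h
  calc 2 * ∑ i, η i * Phi c σ i - Klam l c (Phi c σ)
      = 2 * ∑ k, η k * σ k + ∑ k, (∑ i ∈ univ.filter (fun i => i < k), (c k i : ℝ) * η i) *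
          Kfun (σ k) - ∑ k, (l k : ℝ) * Kfun (σ k) := by
        simp only [Phi, Klam_Phi, mul_add, sum_add_distrib, mul_left_comm _ (1 / 2 : ℝ),
          ← mul_sum, h]
        ring
    _ = _ := by
        rw [mul_sum, ← sum_add_distrib, ← sum_sub_distrib]
        exact sum_congr rfl fun _ _ => by rw [polytopeBound]; ring

theorem two_mul_sum_sub_Klam_le_of_eq_Jact {η τ₀ : Fin ℓ → ℝ}
    (hpos : ∀ j, 0 ≤ (l j : ℝ) - Lfun l c j τ₀)
    (hJ : ∀ j, η j = Jact l c j τ₀) (τ : Fin ℓ → ℝ) :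
    2 * ∑ i, η i * τ i - Klam l c τ ≤ 2 * ∑ i, η i * τ₀ i - Klam l c τ₀ := by
  obtain ⟨σ, rfl⟩ := Phi_surjective c τ
  obtain ⟨σ₀, rfl⟩ := Phi_surjective c τ₀
  have hm : ∀ k, polytopeBound l c η k = l k - Lfun l c k (Phi c σ₀) := fun k => by
    simp only [polytopeBound, Lfun, hJ]
  rw [two_mul_sum_sub_Klam_Phi, two_mul_sum_sub_Klam_Phi]
  refine sum_le_sum fun k _ => ?_
  have hη : η k = polytopeBound l c η k * Jfun (σ₀ k) := by rw [hm, hJ k, Jact_Phi]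
  rw [hη]
  exact two_mul_sub_mul_Kfun_le (hm k ▸ hpos k) _ _

end Separation

/-- Theorem 7.3 (analytic core): under the positivity condition, for `η ∈ ℝ^ℓ`
the function `τ ↦ 2⟨η,τ⟩ − K_λ(τ)` is bounded above iff `η` lies in the moment
polytope `Δ`, and it attains a finite maximum iff `η` lies in the image of the
moment map `J = (J₁,…,J_ℓ)`. -/
theorem bounded_iff_in_polytope_and_max_iff_in_image {ℓ : ℕ} (l : Fin ℓ → ℤ)
    (c : Fin ℓ → Fin ℓ → ℤ)
    (hpos : ∀ τ : Fin ℓ → ℝ, ∀ j : Fin ℓ, 0 < (l j : ℝ) - Lfun l c j τ)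
    (η : Fin ℓ → ℝ) :
    (BddAbove (Set.range fun τ : Fin ℓ → ℝ =>
        2 * (∑ i, η i * τ i) - Klam l c τ) ↔
      ∀ j : Fin ℓ, 0 ≤ η j ∧ η j ≤ (l j : ℝ) -
        ∑ i ∈ Finset.univ.filter (fun i => i < j), (c j i : ℝ) * η i) ∧
    ((∃ τ₀ : Fin ℓ → ℝ, ∀ τ : Fin ℓ → ℝ,
        2 * (∑ i, η i * τ i) - Klam l c τ ≤
          2 * (∑ i, η i * τ₀ i) - Klam l c τ₀) ↔
      ∃ τ₀ : Fin ℓ → ℝ, ∀ j : Fin ℓ, η j = Jact l c j τ₀) := by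
  refine ⟨?_, ⟨fun ⟨τ₀, hmax⟩ => ⟨τ₀, fun j => ?_⟩, fun ⟨τ₀, hJ⟩ => ⟨τ₀, ?_⟩⟩⟩
  · rw [← (Phi_surjective c).range_comp]
    simp only [Function.comp_def, two_mul_sum_sub_Klam_Phi]
    rw [bddAbove_range_sum_iff (fun k s => 2 * η k * s - polytopeBound l c η k * Kfun s)]
    exact forall_congr' fun k => bddAbove_range_two_mul_sub_mul_Kfun_iff _ _
  · exact (Jact_eq_of_isLocalMax l c (Filter.Eventually.of_forall hmax) j).symm
  · exact two_mul_sum_sub_Klam_le_of_eq_Jact l c (fun j => (hpos τ₀ j).le) hJ
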